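/- (Infinite-horizon Parisian ruin) For u ≥ 1 and integer delay ζ ≥ 1, P_u(τ^ζ < ∞) = P_u(T_0 < ∞) − (1 − P_1(τ^ζ < ∞)) Σ_{z=0}^{ζ−1} P_u(T_0 < ∞, −R_{T_0} = z) · P(τ_{z+1} ≤ ζ), where P_1(τ^ζ < ∞) = [P_1(T_0 < ∞) − A] / [1 − A] with A = Σ_{z=0}^{ζ−1} P_1(T_0 < ∞, −R_{T_0} = z) P(τ_{z+1} ≤ ζ). -/

import Mathlib

open MeasureTheory ProbabilityTheory Filter
open scoped ENNReal

noncomputable section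

variable {Ω : Type*} [MeasureSpace Ω]

/-- Aggregate claims `S_t = Y_1 + ... + Y_t`. -/
def aggClaims (Y : ℕ → Ω → ℕ) (t : ℕ) (ω : Ω) : ℕ := ∑ i ∈ Finset.range t, Y i ω

/-- Risk process `R_t = u + t - S_t`. -/
def riskProc (Y : ℕ → Ω → ℕ) (u : ℤ) (t : ℕ) (ω : Ω) : ℤ := u + t - aggClaims Y t ω

/-- Classical ruin time `T_0 = inf {t ≥ 1 : R_t ≤ 0}`. -/
def ruinTime (Y : ℕ → Ω → ℕ) (u : ℤ) (ω : Ω) : ℕ∞ :=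
  sInf ((fun t : ℕ => (t : ℕ∞)) '' {t : ℕ | 1 ≤ t ∧ riskProc Y u t ω ≤ 0})

/-- Last time strictly before `n` at which the risk process was strictly positive. -/
def lastUp (Y : ℕ → Ω → ℕ) (u : ℤ) (n : ℕ) (ω : Ω) : ℕ :=
  sSup {s : ℕ | s < n ∧ 0 < riskProc Y u s ω}

/-- Parisian ruin time with delay `ζ`. -/
def parisian (Y : ℕ → Ω → ℕ) (u : ℤ) (ζ : ℕ) (ω : Ω) : ℕ∞ :=
  sInf ((fun n : ℕ => (n : ℕ∞)) ''
    {n : ℕ | ζ < n - lastUp Y u n ω ∧ riskProc Y u n ω ≤ 0})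

/-- First hitting time of level `x` by the walk started at `0`. -/
def hitTime (Y : ℕ → Ω → ℕ) (x : ℤ) (ω : Ω) : ℕ∞ :=
  sInf ((fun n : ℕ => (n : ℕ∞)) '' {n : ℕ | 1 ≤ n ∧ riskProc Y 0 n ω = x})

/-- `P_v(T_0 < ∞, -R_{T_0} = z) · P(τ_{z+1} ≤ ζ)` summed over `z = 0, ..., ζ-1`. -/
def deficitSum (Y : ℕ → Ω → ℕ) (v : ℤ) (ζ : ℕ) : ℝ :=
  ∑ z ∈ Finset.range ζ,
    (ℙ {ω | ∃ s : ℕ, ruinTime Y v ω = (s : ℕ∞) ∧ riskProc Y v s ω = -(z : ℤ)}).toReal *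
    (ℙ {ω | hitTime Y ((z : ℤ) + 1) ω ≤ (ζ : ℕ∞)}).toReal

/-!
Split according to the first classical ruin. Without it there is no Parisian ruin. If the first
ruin happens at time `t` with deficit `z`, Parisian ruin is avoided iff the claims after `t` reach
level `z + 1` within `ζ` steps, say at time `ρ` (the walk is then back at `1`: it moves up by at
most one per step), and the walk restarted from `1` at time `t + ρ` never suffers Parisian ruin.
The Markov property at the deterministic times `t` and `t + ρ` (the claims before a time are
independent of those after it, whose law is shift invariant) turns this into
`P_u(τ^ζ = ∞) = P_u(T_0 = ∞) + A_u · P_1(τ^ζ = ∞)`, which is the first identity; at `u = 1` it is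
solved for `P_1(τ^ζ = ∞)`. The denominator `1 - A_1` is nonzero because `P_1(T_0 = ∞) > 0`: by the
strong law some capital `k + 1` survives with positive probability, and a first claim of size `0`
(which has positive probability since `E Y < 1`) carries this down to capital `1`.
-/

namespace ENat

lemma sInf_image_natCast_eq_top_iff {T : Set ℕ} :
    sInf (((↑) : ℕ → ℕ∞) '' T) = ⊤ ↔ T = ∅ := by
  simp [sInf_eq_top, Set.eq_empty_iff_forall_notMem]

lemma sInf_image_natCast_eq_natCast_iff {T : Set ℕ} {t : ℕ} :
    sInf (((↑) : ℕ → ℕ∞) '' T) = t ↔ IsLeast T t := by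
  have hcast : ∀ {s : ℕ}, IsLeast T s → sInf (((↑) : ℕ → ℕ∞) '' T) = s := fun hs =>
    ((Nat.strictMono_cast.map_isLeast).2 hs).isGLB.sInf_eq
  refine ⟨fun h => ?_, hcast⟩
  have hT : T.Nonempty := by
    rw [Set.nonempty_iff_ne_empty, Ne, ← sInf_image_natCast_eq_top_iff, h]
    exact natCast_ne_top t
  have hleast : IsLeast T (sInf T) := ⟨Nat.sInf_mem hT, fun _ => Nat.sInf_le⟩
  rwa [← Nat.cast_inj.1 ((hcast hleast).symm.trans h)]

end ENat

def shiftClaims {α : Type*} (Y : ℕ → α → ℕ) (t : ℕ) : ℕ → α → ℕ := fun i => Y (t + i)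

section Pathwise

variable {α : Type*} {Y : ℕ → α → ℕ} {u x : ℤ} {ζ n t : ℕ} {ω : α}

lemma riskProc_zero : riskProc Y u 0 ω = u := by
  simp [riskProc, aggClaims]

lemma riskProc_eq_add_riskProc_zero : riskProc Y u n ω = u + riskProc Y 0 n ω := by
  simp only [riskProc]; ring

lemma riskProc_le_add : riskProc Y u n ω ≤ u + n := by
  simp only [riskProc]; omega

lemma riskProc_succ_le : riskProc Y u (n + 1) ω ≤ riskProc Y u n ω + 1 := by
  simp only [riskProc, aggClaims, Finset.sum_range_succ]; push_cast; omega

lemma riskProc_add (t n : ℕ) :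
    riskProc Y u (t + n) ω = riskProc (shiftClaims Y t) (riskProc Y u t ω) n ω := by
  simp only [riskProc, aggClaims, shiftClaims, Finset.sum_range_add]; push_cast; ring

lemma riskProc_one : riskProc Y u 1 ω = u + 1 - Y 0 ω := by
  simp [riskProc, aggClaims]

lemma ruinTime_eq_top_iff (hu : 0 < u) : ruinTime Y u ω = ⊤ ↔ ∀ n, 0 < riskProc Y u n ω := by
  rw [ruinTime, ENat.sInf_image_natCast_eq_top_iff, Set.eq_empty_iff_forall_notMem]
  refine forall_congr' fun n => ?_
  rcases n.eq_zero_or_pos with rfl | hn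
  · simp [riskProc_zero, hu]
  · simp [Nat.one_le_iff_ne_zero.2 hn.ne']

lemma ruinTime_eq_top_of_shiftClaims (hu : 0 < u) (h0 : Y 0 ω = 0)
    (h : ruinTime (shiftClaims Y 1) (u + 1) ω = ⊤) : ruinTime Y u ω = ⊤ := by
  rw [ruinTime_eq_top_iff (by omega)] at h
  refine (ruinTime_eq_top_iff hu).2 fun n => ?_
  rcases n with _ | k
  · rwa [riskProc_zero]
  · rw [add_comm, riskProc_add, riskProc_one, h0]
    simpa using h k

lemma riskProc_ruinTime_nonpos (hT : ruinTime Y u ω = t) : riskProc Y u t ω ≤ 0 := by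
  rw [ruinTime, ENat.sInf_image_natCast_eq_natCast_iff] at hT
  exact hT.1.2

lemma exists_ruinTime_eq_and_riskProc_eq (hT : ruinTime Y u ω ≠ ⊤) :
    ∃ z : ℕ, ∃ s : ℕ, ruinTime Y u ω = s ∧ riskProc Y u s ω = -(z : ℤ) := by
  obtain ⟨s, hs⟩ := ENat.ne_top_iff_exists.1 hT
  have := riskProc_ruinTime_nonpos hs.symm
  exact ⟨(-riskProc Y u s ω).toNat, s, hs.symm, by omega⟩

lemma riskProc_pos_of_ruinTime_eq (hu : 0 < u) (hT : ruinTime Y u ω = t) {s : ℕ} (hs : s < t) :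
    0 < riskProc Y u s ω := by
  rw [ruinTime, ENat.sInf_image_natCast_eq_natCast_iff] at hT
  rcases s.eq_zero_or_pos with rfl | hs0
  · rwa [riskProc_zero]
  · by_contra! h
    exact absurd (hT.2 ⟨hs0, h⟩) (by omega)

lemma riskProc_hitTime (h : hitTime Y x ω = n) : riskProc Y 0 n ω = x := by
  rw [hitTime, ENat.sInf_image_natCast_eq_natCast_iff] at h
  exact h.1.2

lemma le_of_hitTime_le (h : hitTime Y x ω ≤ n) : x ≤ n := by
  obtain ⟨k, hk, hkn⟩ := ENat.le_natCast_iff.1 h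
  have := riskProc_hitTime hk
  have := riskProc_le_add (Y := Y) (u := 0) (n := k) (ω := ω)
  omega

lemma setOf_hitTime_le_eq_empty {z : ℕ} (h : ζ ≤ z) : {ω | hitTime Y ((z : ℤ) + 1) ω ≤ ζ} = ∅ :=
  Set.eq_empty_of_forall_notMem fun ω hω => by
    have := le_of_hitTime_le hω
    omega

-- The walk moves up by at most one per step.
lemma hitTime_le_of_le_riskProc (hx : 0 < x) (h : x ≤ riskProc Y 0 n ω) : hitTime Y x ω ≤ n := by
  induction n with
  | zero => rw [riskProc_zero] at h; omega
  | succ k ih =>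
    by_cases hk : x ≤ riskProc Y 0 k ω
    · exact (ih hk).trans (by exact_mod_cast k.le_succ)
    · have := riskProc_succ_le (Y := Y) (u := 0) (n := k) (ω := ω)
      exact sInf_le ⟨k + 1, ⟨k.succ_pos, by omega⟩, rfl⟩

lemma le_lastUp {s : ℕ} (hs : s < n) (hpos : 0 < riskProc Y u s ω) : s ≤ lastUp Y u n ω :=
  le_csSup (s := {s | s < n ∧ 0 < riskProc Y u s ω}) ⟨n, fun _ h => h.1.le⟩ ⟨hs, hpos⟩

lemma lastUp_lt (hu : 0 < u) (hn : 0 < n) :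
    lastUp Y u n ω < n ∧ 0 < riskProc Y u (lastUp Y u n ω) ω :=
  Nat.sSup_mem (s := {s | s < n ∧ 0 < riskProc Y u s ω}) ⟨0, hn, by rwa [riskProc_zero]⟩
    ⟨n, fun _ h => h.1.le⟩

lemma parisian_eq_top_iff (hu : 0 < u) :
    parisian Y u ζ ω = ⊤ ↔ ∀ a, ∃ j ≤ ζ, 0 < riskProc Y u (a + j) ω := by
  rw [parisian, ENat.sInf_image_natCast_eq_top_iff, Set.eq_empty_iff_forall_notMem, ← not_iff_not]
  push Not
  constructor
  · rintro ⟨n, hgap, hn⟩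
    have hL := (lastUp_lt (Y := Y) (ω := ω) hu (n := n) (by omega)).1
    refine ⟨n - ζ, fun j hj => ?_⟩
    rcases (show n - ζ + j ≤ n by omega).eq_or_lt with h | h
    · rwa [h]
    · by_contra! hpos
      have := le_lastUp h hpos
      omega
  · rintro ⟨a, ha⟩
    have ha0 : 0 < a := by
      by_contra! h0
      have := ha 0 (Nat.zero_le _)
      rw [Nat.le_zero.1 h0, riskProc_zero] at this
      omega
    obtain ⟨hL, hLpos⟩ := lastUp_lt (Y := Y) (ω := ω) hu (n := a + ζ) (by omega)
    have hLa : lastUp Y u (a + ζ) ω < a := by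
      by_contra! h
      have := ha (lastUp Y u (a + ζ) ω - a) (by omega)
      rw [Nat.add_sub_cancel' h] at this
      omega
    exact ⟨a + ζ, by omega, ha ζ le_rfl⟩

lemma parisian_eq_top_of_ruinTime_eq_top (hu : 0 < u) (hT : ruinTime Y u ω = ⊤) :
    parisian Y u ζ ω = ⊤ :=
  (parisian_eq_top_iff hu).2 fun _ => ⟨0, Nat.zero_le _, (ruinTime_eq_top_iff hu).1 hT _⟩

lemma setOf_parisian_eq_top (hu : 0 < u) :
    {ω | parisian Y u ζ ω = ⊤} = {ω | ruinTime Y u ω = ⊤} ∪ ⋃ z : ℕ, {ω | parisian Y u ζ ω = ⊤} ∩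
      {ω | ∃ s : ℕ, ruinTime Y u ω = (s : ℕ∞) ∧ riskProc Y u s ω = -(z : ℤ)} := by
  ext ω
  simp only [Set.mem_union, Set.mem_iUnion, Set.mem_inter_iff, Set.mem_ofPred_eq]
  refine ⟨fun hP => (em _).imp_right fun hT => ?_, ?_⟩
  · obtain ⟨z, hz⟩ := exists_ruinTime_eq_and_riskProc_eq hT
    exact ⟨z, hP, hz⟩
  · rintro (hT | ⟨z, hP, -⟩)
    exacts [parisian_eq_top_of_ruinTime_eq_top hu hT, hP]

lemma parisian_shiftClaims_eq_top_iff (hpos : 0 < riskProc Y u t ω) :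
    parisian (shiftClaims Y t) (riskProc Y u t ω) ζ ω = ⊤ ↔
      ∀ a, ∃ j ≤ ζ, 0 < riskProc Y u (t + a + j) ω := by
  simp only [parisian_eq_top_iff hpos, add_assoc, riskProc_add t]

-- Climbing from `-z` back to `1` takes the claims after `t` exactly their hitting time of `z + 1`.
lemma parisian_eq_top_iff_of_ruinTime_eq (hu : 0 < u) {z : ℕ} (hT : ruinTime Y u ω = t)
    (hz : riskProc Y u t ω = -z) :
    parisian Y u ζ ω = ⊤ ↔ ∃ ρ ≤ ζ, hitTime (shiftClaims Y t) ((z : ℤ) + 1) ω = ρ ∧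
      parisian (shiftClaims Y (t + ρ)) 1 ζ ω = ⊤ := by
  have hafter : ∀ k, riskProc Y u (t + k) ω = -z + riskProc (shiftClaims Y t) 0 k ω := fun k => by
    rw [riskProc_add, hz, riskProc_eq_add_riskProc_zero]
  have hreturn : ∀ {ρ : ℕ}, hitTime (shiftClaims Y t) ((z : ℤ) + 1) ω = ρ →
      riskProc Y u (t + ρ) ω = 1 := fun hρ => by
    rw [hafter, riskProc_hitTime hρ]; ring
  rw [parisian_eq_top_iff hu]
  constructor
  · intro hwin
    obtain ⟨j, hjζ, hj⟩ := hwin t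
    have hclimb : (z : ℤ) + 1 ≤ riskProc (shiftClaims Y t) 0 j ω := by
      have := hafter j; omega
    obtain ⟨ρ, hρ, hρj⟩ := ENat.le_natCast_iff.1 (hitTime_le_of_le_riskProc (by omega) hclimb)
    have hρ1 := hreturn hρ
    refine ⟨ρ, hρj.trans hjζ, hρ, ?_⟩
    rw [← hρ1, parisian_shiftClaims_eq_top_iff (by omega)]
    exact fun a => hwin (t + ρ + a)
  · rintro ⟨ρ, hρζ, hρ, hnext⟩
    have hρ1 := hreturn hρ
    rw [← hρ1, parisian_shiftClaims_eq_top_iff (by omega)] at hnext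
    intro a
    rcases lt_or_ge a t with hat | hat
    · exact ⟨0, Nat.zero_le _, riskProc_pos_of_ruinTime_eq hu hT hat⟩
    rcases lt_or_ge a (t + ρ) with haρ | haρ
    · exact ⟨t + ρ - a, by omega, by rw [Nat.add_sub_cancel' haρ.le, hρ1]; exact one_pos⟩
    · simpa [Nat.add_sub_cancel' haρ] using hnext (a - (t + ρ))

end Pathwise

section Measurability

variable {α : Type*} {m : MeasurableSpace α} {Y : ℕ → α → ℕ} {u : ℤ} {ζ t : ℕ}

lemma measurable_riskProc {n : ℕ} (hY : ∀ i < n, Measurable[m] (Y i)) (u : ℤ) {k : ℕ}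
    (hk : k ≤ n) : Measurable[m] (riskProc Y u k) := by
  have hS : Measurable[m] (aggClaims Y k) :=
    Finset.measurable_sum _ fun i hi => hY i (by rw [Finset.mem_range] at hi; omega)
  exact measurable_const.sub (measurable_from_top.comp hS)

lemma measurableSet_isLeast {p : ℕ → α → Prop} (hp : ∀ n ≤ t, MeasurableSet[m] {ω | p n ω}) :
    MeasurableSet[m] {ω | IsLeast {n | p n ω} t} := by
  have h : ∀ ω, IsLeast {n | p n ω} t ↔ p t ω ∧ ∀ n : Fin t, ¬ p n ω := fun ω =>
    ⟨fun h => ⟨h.1, fun (n : Fin t) hn => absurd (h.2 hn) (not_le.2 n.2)⟩,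
      fun h => ⟨h.1, fun n hn => not_lt.1 fun hlt => h.2 ⟨n, hlt⟩ hn⟩⟩
  simp only [h]
  exact ((hp t le_rfl).mem.and (Measurable.forall fun n : Fin t => (hp n n.2.le).mem.not)).setOf

lemma measurableSet_ruinTime_eq {n : ℕ} (hY : ∀ i < n, Measurable[m] (Y i)) (u : ℤ) :
    MeasurableSet[m] {ω | ruinTime Y u ω = n} := by
  simp only [ruinTime, ENat.sInf_image_natCast_eq_natCast_iff]
  exact measurableSet_isLeast fun k hk =>
    (MeasurableSet.const _).inter (measurable_riskProc hY u hk measurableSet_Iic)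

lemma measurableSet_ruinTime_eq_and_riskProc_eq {n : ℕ} (hY : ∀ i < n, Measurable[m] (Y i))
    (u y : ℤ) : MeasurableSet[m] {ω | ruinTime Y u ω = n ∧ riskProc Y u n ω = y} :=
  (measurableSet_ruinTime_eq hY u).inter
    (measurable_riskProc hY u le_rfl (measurableSet_singleton y))

lemma measurableSet_exists_ruinTime_eq_and_riskProc_eq (hY : ∀ i, Measurable[m] (Y i))
    (u y : ℤ) : MeasurableSet[m] {ω | ∃ s : ℕ, ruinTime Y u ω = s ∧ riskProc Y u s ω = y} := by
  simp only [Set.ofPred_exists]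
  exact MeasurableSet.iUnion fun s =>
    measurableSet_ruinTime_eq_and_riskProc_eq (fun i _ => hY i) _ _

lemma measurableSet_hitTime_eq {n : ℕ} (hY : ∀ i < n, Measurable[m] (Y i)) (x : ℤ) :
    MeasurableSet[m] {ω | hitTime Y x ω = n} := by
  simp only [hitTime, ENat.sInf_image_natCast_eq_natCast_iff]
  exact measurableSet_isLeast fun k hk =>
    (MeasurableSet.const _).inter (measurable_riskProc hY 0 hk (measurableSet_singleton x))

lemma measurableSet_ruinTime_eq_top (hY : ∀ i, Measurable[m] (Y i)) (hu : 0 < u) :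
    MeasurableSet[m] {ω | ruinTime Y u ω = ⊤} := by
  simp only [ruinTime_eq_top_iff hu, Set.ofPred_forall]
  exact MeasurableSet.iInter fun n =>
    measurable_riskProc (fun i _ => hY i) u le_rfl measurableSet_Ioi

lemma measurableSet_parisian_eq_top (hY : ∀ i, Measurable[m] (Y i)) (hu : 0 < u) :
    MeasurableSet[m] {ω | parisian Y u ζ ω = ⊤} := by
  simp only [parisian_eq_top_iff hu]
  refine (Measurable.forall fun a => Measurable.exists fun j => ?_).setOf
  exact measurable_const.and (measurable_riskProc (fun i _ => hY i) u le_rfl measurableSet_Ioi).mem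

end Measurability

section Markov

variable {α : Type*}

@[reducible] def claimsBefore (Y : ℕ → α → ℕ) (t : ℕ) : MeasurableSpace α :=
  ⨆ i < t, MeasurableSpace.comap (Y i) inferInstance

def claimPath (Y : ℕ → α → ℕ) (ω : α) : ℕ → ℕ := fun i => Y i ω

lemma measurable_claimsBefore {Y : ℕ → α → ℕ} {i t : ℕ} (h : i < t) :
    Measurable[claimsBefore Y t] (Y i) :=
  Measurable.of_comap_le (le_iSup₂_of_le i h le_rfl)

lemma claimsBefore_le [m : MeasurableSpace α] {Y : ℕ → α → ℕ} (hY : ∀ i, Measurable (Y i))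
    (t : ℕ) : claimsBefore Y t ≤ m :=
  iSup₂_le fun i _ => (hY i).comap_le

lemma measurable_claimPath [MeasurableSpace α] {Y : ℕ → α → ℕ} (hY : ∀ i, Measurable (Y i)) :
    Measurable (claimPath Y) :=
  measurable_pi_lambda _ hY

variable {Y : ℕ → Ω → ℕ} (hY : ∀ i, Measurable (Y i)) (hindep : iIndepFun Y ℙ)
  (hid : ∀ i, IdentDistrib (Y i) (Y 0) ℙ ℙ)

include hY hindep in
lemma indep_claimsBefore_claimPath_shiftClaims (t : ℕ) :
    Indep (claimsBefore Y t)
      (MeasurableSpace.comap (claimPath (shiftClaims Y t)) inferInstance) ℙ := by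
  refine indep_of_indep_of_le_right
    (indep_iSup_of_disjoint (fun i => (hY i).comap_le) hindep
      (S := {i | i < t}) (T := {i | t ≤ i}) (Set.disjoint_left.2 fun i hi hi' => by
        simp only [Set.mem_ofPred_eq] at hi hi'; omega)) ?_
  rw [MeasurableSpace.pi, MeasurableSpace.comap_iSup]
  refine iSup_le fun i => ?_
  rw [MeasurableSpace.comap_comp]
  exact le_iSup₂_of_le
    (f := fun i (_ : i ∈ {i | t ≤ i}) => MeasurableSpace.comap (Y i) inferInstance)
    (t + i) (Nat.le_add_right t i) le_rfl

include hY hindep hid in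
lemma map_claimPath_shiftClaims (t : ℕ) :
    (ℙ : Measure Ω).map (claimPath (shiftClaims Y t)) = (ℙ : Measure Ω).map (claimPath Y) := by
  unfold claimPath shiftClaims
  rw [(hindep.precomp (add_right_injective t)).map_fun_eq_infinitePi_map (fun i => hY _),
    hindep.map_fun_eq_infinitePi_map hY]
  congr 1
  funext i
  rw [(hid _).map_eq, (hid i).map_eq]

include hY hindep hid in
lemma measure_inter_claimPath_shiftClaims_preimage {t : ℕ} {A : Set Ω} {D : Set (ℕ → ℕ)}
    (hA : MeasurableSet[claimsBefore Y t] A) (hD : MeasurableSet D) :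
    ℙ (A ∩ claimPath (shiftClaims Y t) ⁻¹' D) = ℙ A * ℙ (claimPath Y ⁻¹' D) := by
  rw [(Indep_iff _ _ _).1 (indep_claimsBefore_claimPath_shiftClaims hY hindep t) _ _ hA
      ⟨D, hD, rfl⟩, ← Measure.map_apply (measurable_claimPath hY) hD,
    ← map_claimPath_shiftClaims hY hindep hid t,
    Measure.map_apply (measurable_claimPath (Y := shiftClaims Y t) fun i => hY _) hD]

end Markov

-- Evaluated at `coordClaims`, the random times become functions on path space: e.g.
-- `{ω | parisian Y 1 ζ ω = ⊤} = claimPath Y ⁻¹' {f | parisian coordClaims 1 ζ f = ⊤}` is `rfl`.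
def coordClaims : ℕ → (ℕ → ℕ) → ℕ := fun i f => f i

lemma setOf_parisian_eq_top_inter_ruin {α : Type*} {Y : ℕ → α → ℕ} {u : ℤ} {ζ t z : ℕ}
    (hu : 0 < u) :
    {ω | parisian Y u ζ ω = ⊤} ∩ {ω | ruinTime Y u ω = t ∧ riskProc Y u t ω = -(z : ℤ)} =
      ⋃ ρ ∈ Finset.range (ζ + 1),
        ({ω | ruinTime Y u ω = t ∧ riskProc Y u t ω = -(z : ℤ)} ∩
          claimPath (shiftClaims Y t) ⁻¹' {f | hitTime coordClaims ((z : ℤ) + 1) f = ρ}) ∩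
        claimPath (shiftClaims Y (t + ρ)) ⁻¹' {f | parisian coordClaims 1 ζ f = ⊤} := by
  ext ω
  simp only [Set.mem_inter_iff, Set.mem_iUnion, Finset.mem_range, Nat.lt_succ_iff, exists_prop]
  constructor
  · rintro ⟨hP, hω⟩
    obtain ⟨ρ, hρ, hit, hnext⟩ := (parisian_eq_top_iff_of_ruinTime_eq hu hω.1 hω.2).1 hP
    exact ⟨ρ, hρ, ⟨hω, hit⟩, hnext⟩
  · rintro ⟨ρ, hρ, ⟨hω, hit⟩, hnext⟩
    exact ⟨(parisian_eq_top_iff_of_ruinTime_eq hu hω.1 hω.2).2 ⟨ρ, hρ, hit, hnext⟩, hω⟩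

lemma measure_le_natCast_eq_sum {α : Type*} [MeasurableSpace α] {μ : Measure α} {X : α → ℕ∞}
    (hX : ∀ n : ℕ, MeasurableSet {ω | X ω = n}) (N : ℕ) :
    μ {ω | X ω ≤ N} = ∑ n ∈ Finset.range (N + 1), μ {ω | X ω = n} := by
  have hset : {ω | X ω ≤ N} = ⋃ n ∈ Finset.range (N + 1), {ω | X ω = n} := by
    ext ω
    simp [ENat.le_natCast_iff, and_comm]
  rw [hset, measure_biUnion_finset _ fun n _ => hX n]
  intro n _ n' _ hne
  exact Set.disjoint_left.2 fun ω h h' => hne (Nat.cast_injective (h.symm.trans h'))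

section Decomposition

variable {Y : ℕ → Ω → ℕ} (hY : ∀ i, Measurable (Y i))
  (hindep : iIndepFun Y ℙ) (hid : ∀ i, IdentDistrib (Y i) (Y 0) ℙ ℙ) {u : ℤ} {ζ : ℕ}

include hY hindep hid in
lemma measure_parisian_eq_top_inter_ruin (hu : 0 < u) (t z : ℕ) :
    ℙ ({ω | parisian Y u ζ ω = ⊤} ∩ {ω | ruinTime Y u ω = t ∧ riskProc Y u t ω = -(z : ℤ)}) =
      ℙ {ω | ruinTime Y u ω = t ∧ riskProc Y u t ω = -(z : ℤ)} *
        ℙ {ω | hitTime Y ((z : ℤ) + 1) ω ≤ ζ} * ℙ {ω | parisian Y 1 ζ ω = ⊤} := by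
  let E := {ω | ruinTime Y u ω = t ∧ riskProc Y u t ω = -(z : ℤ)}
  let H : ℕ → Set (ℕ → ℕ) := fun ρ => {f | hitTime coordClaims ((z : ℤ) + 1) f = ρ}
  let N : Set (ℕ → ℕ) := {f | parisian coordClaims 1 ζ f = ⊤}
  have hN : MeasurableSet N :=
    measurableSet_parisian_eq_top (fun i => measurable_pi_apply i) one_pos
  have hH : ∀ ρ, MeasurableSet (H ρ) := fun ρ =>
    measurableSet_hitTime_eq (fun i _ => measurable_pi_apply i) _
  have hE : ∀ {s}, t ≤ s → MeasurableSet[claimsBefore Y s] E := fun hts =>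
    measurableSet_ruinTime_eq_and_riskProc_eq (fun i hi => measurable_claimsBefore (by omega)) _ _
  have hEH : ∀ ρ, MeasurableSet[claimsBefore Y (t + ρ)]
      (E ∩ claimPath (shiftClaims Y t) ⁻¹' H ρ) := fun ρ => by
    have h := measurableSet_hitTime_eq (m := claimsBefore Y (t + ρ)) (Y := shiftClaims Y t) (n := ρ)
      (fun i hi => measurable_claimsBefore (by omega)) ((z : ℤ) + 1)
    exact (hE (Nat.le_add_right t ρ)).inter h
  have hterm : ∀ ρ, ℙ ((E ∩ claimPath (shiftClaims Y t) ⁻¹' H ρ) ∩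
      claimPath (shiftClaims Y (t + ρ)) ⁻¹' N) =
        ℙ E * ℙ {ω | hitTime Y ((z : ℤ) + 1) ω = ρ} * ℙ {ω | parisian Y 1 ζ ω = ⊤} := fun ρ => by
    rw [measure_inter_claimPath_shiftClaims_preimage hY hindep hid (hEH ρ) hN,
      measure_inter_claimPath_shiftClaims_preimage hY hindep hid (hE le_rfl) (hH ρ)]
    rfl
  rw [setOf_parisian_eq_top_inter_ruin hu, measure_biUnion_finset,
    Finset.sum_congr rfl fun ρ _ => hterm ρ, ← Finset.sum_mul, ← Finset.mul_sum,
    measure_le_natCast_eq_sum fun n => measurableSet_hitTime_eq (fun i _ => hY i) _]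
  · intro ρ _ ρ' _ hne
    refine Set.disjoint_left.2 fun ω h h' => hne (Nat.cast_injective (R := ℕ∞) ?_)
    exact h.1.2.symm.trans h'.1.2
  · exact fun ρ _ =>
      (claimsBefore_le hY _ _ (hEH ρ)).inter (measurable_claimPath (fun i => hY _) hN)

include hY in
lemma measure_inter_ruin_deficit {S : Set Ω} (hS : MeasurableSet S) (z : ℕ) :
    ℙ (S ∩ {ω | ∃ s : ℕ, ruinTime Y u ω = (s : ℕ∞) ∧ riskProc Y u s ω = -(z : ℤ)}) =
      ∑' t : ℕ, ℙ (S ∩ {ω | ruinTime Y u ω = t ∧ riskProc Y u t ω = -(z : ℤ)}) := by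
  rw [← measure_iUnion]
  · congr 1
    ext ω
    simp
  · intro t t' hne
    exact Set.disjoint_left.2 fun ω h h' =>
      hne (Nat.cast_injective (R := ℕ∞) (h.2.1.symm.trans h'.2.1))
  · exact fun t => hS.inter (measurableSet_ruinTime_eq_and_riskProc_eq (fun i _ => hY i) _ _)

include hY hindep hid in
lemma measure_parisian_eq_top_inter_deficit (hu : 0 < u) (z : ℕ) :
    ℙ ({ω | parisian Y u ζ ω = ⊤} ∩
        {ω | ∃ s : ℕ, ruinTime Y u ω = (s : ℕ∞) ∧ riskProc Y u s ω = -(z : ℤ)}) =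
      ℙ {ω | ∃ s : ℕ, ruinTime Y u ω = (s : ℕ∞) ∧ riskProc Y u s ω = -(z : ℤ)} *
        ℙ {ω | hitTime Y ((z : ℤ) + 1) ω ≤ (ζ : ℕ∞)} * ℙ {ω | parisian Y 1 ζ ω = ⊤} := by
  have hD := measure_inter_ruin_deficit hY MeasurableSet.univ (u := u) z
  simp only [Set.univ_inter] at hD
  rw [measure_inter_ruin_deficit hY (measurableSet_parisian_eq_top hY hu), hD,
    ← ENNReal.tsum_mul_right, ← ENNReal.tsum_mul_right]
  exact tsum_congr fun t => measure_parisian_eq_top_inter_ruin hY hindep hid hu t z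

include hY hindep hid in
lemma measure_parisian_eq_top (hu : 0 < u) :
    ℙ {ω | parisian Y u ζ ω = ⊤} = ℙ {ω | ruinTime Y u ω = ⊤} +
      (∑ z ∈ Finset.range ζ,
        ℙ {ω | ∃ s : ℕ, ruinTime Y u ω = (s : ℕ∞) ∧ riskProc Y u s ω = -(z : ℤ)} *
          ℙ {ω | hitTime Y ((z : ℤ) + 1) ω ≤ (ζ : ℕ∞)}) * ℙ {ω | parisian Y 1 ζ ω = ⊤} := by
  have hND : ∀ z : ℕ, MeasurableSet ({ω | parisian Y u ζ ω = ⊤} ∩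
      {ω | ∃ s : ℕ, ruinTime Y u ω = (s : ℕ∞) ∧ riskProc Y u s ω = -(z : ℤ)}) := fun z =>
    (measurableSet_parisian_eq_top hY hu).inter
      (measurableSet_exists_ruinTime_eq_and_riskProc_eq hY u _)
  have hfinite : ∀ z ∉ Finset.range ζ, ℙ {ω | hitTime Y ((z : ℤ) + 1) ω ≤ (ζ : ℕ∞)} = 0 :=
    fun z hz => by
      rw [setOf_hitTime_le_eq_empty (not_lt.1 (Finset.mem_range.not.1 hz)), measure_empty]
  rw [setOf_parisian_eq_top hu, measure_union _ (MeasurableSet.iUnion hND), measure_iUnion _ hND,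
    tsum_congr fun z => measure_parisian_eq_top_inter_deficit hY hindep hid hu z,
    tsum_eq_sum fun z hz => by rw [hfinite z hz, mul_zero, zero_mul], Finset.sum_mul]
  · intro z z' hne
    refine Set.disjoint_left.2 fun ω ⟨_, s, hs, hz⟩ ⟨_, s', hs', hz'⟩ => hne ?_
    obtain rfl : s = s' := Nat.cast_injective (R := ℕ∞) (hs.symm.trans hs')
    omega
  · refine Set.disjoint_left.2 fun ω hT h => ?_
    obtain ⟨z, -, s, hs, -⟩ := Set.mem_iUnion.1 h
    exact ENat.natCast_ne_top s (hs.symm.trans hT)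

end Decomposition

section Survival

variable {Y : ℕ → Ω → ℕ} (hY : ∀ i, Measurable (Y i))
  (hindep : iIndepFun Y ℙ) (hid : ∀ i, IdentDistrib (Y i) (Y 0) ℙ ℙ)
  (hint : Integrable (fun ω => (Y 0 ω : ℝ)) ℙ) (hμ : ∫ ω, (Y 0 ω : ℝ) ∂ℙ < 1)

include hindep hid hint hμ in
-- By the strong law `S_n < n` for all large `n`, so a large enough capital prevents ruin.
lemma ae_exists_ruinTime_eq_top : ∀ᵐ ω ∂ℙ, ∃ k : ℕ, ruinTime Y ((k : ℤ) + 1) ω = ⊤ := by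
  have hindep' : Pairwise (Function.onFun (IndepFun · · ℙ) fun i ω => (Y i ω : ℝ)) :=
    fun i j hij =>
      (hindep.comp (fun _ => (Nat.cast : ℕ → ℝ)) fun _ => measurable_from_top).indepFun hij
  filter_upwards [strong_law_ae_real (fun i ω => (Y i ω : ℝ)) hint hindep'
    fun i => (hid i).comp measurable_from_top] with ω hω
  obtain ⟨N, hN⟩ := eventually_atTop.1 (hω.eventually_lt_const hμ)
  refine ⟨aggClaims Y N ω, (ruinTime_eq_top_iff (by omega)).2 fun n => ?_⟩
  simp only [riskProc]
  rcases le_or_gt n N with hn | hn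
  · have : aggClaims Y n ω ≤ aggClaims Y N ω :=
      Finset.sum_le_sum_of_subset (Finset.range_subset_range.2 hn)
    omega
  · have h := hN n hn.le
    rw [div_lt_one (by exact_mod_cast (Nat.zero_le N).trans_lt hn)] at h
    have : aggClaims Y n ω < n := by exact_mod_cast h
    omega

include hindep hid hint hμ in
lemma exists_measure_ruinTime_eq_top_pos [IsProbabilityMeasure (ℙ : Measure Ω)] :
    ∃ k : ℕ, 0 < ℙ {ω | ruinTime Y ((k : ℤ) + 1) ω = ⊤} := by
  by_contra! h
  have hnull : ℙ {ω | ∃ k : ℕ, ruinTime Y ((k : ℤ) + 1) ω = ⊤} = 0 := by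
    rw [Set.ofPred_exists]
    exact measure_iUnion_null fun k => nonpos_iff_eq_zero.1 (h k)
  have hcompl := ae_iff.1 (ae_exists_ruinTime_eq_top hindep hid hint hμ)
  have := measure_univ_le_add_compl (μ := (ℙ : Measure Ω))
    {ω | ∃ k : ℕ, ruinTime Y ((k : ℤ) + 1) ω = ⊤}
  rw [measure_univ, hnull, Set.compl_ofPred, hcompl, add_zero] at this
  exact one_ne_zero (nonpos_iff_eq_zero.1 this)

include hint hμ in
lemma measure_claim_eq_zero_pos [IsProbabilityMeasure (ℙ : Measure Ω)] : 0 < ℙ {ω | Y 0 ω = 0} := by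
  refine pos_iff_ne_zero.2 fun h0 => ?_
  have hge : (fun _ => (1 : ℝ)) ≤ᵐ[ℙ] fun ω => (Y 0 ω : ℝ) := by
    filter_upwards [measure_eq_zero_iff_ae_notMem.1 h0] with ω hω
    exact_mod_cast Nat.one_le_iff_ne_zero.2 hω
  have := integral_mono_ae (integrable_const 1) hint hge
  simp only [integral_const, probReal_univ, smul_eq_mul, one_mul] at this
  linarith

include hY hindep hid in
lemma measure_claim_eq_zero_mul_le {u : ℤ} (hu : 0 < u) :
    ℙ {ω | Y 0 ω = 0} * ℙ {ω | ruinTime Y (u + 1) ω = ⊤} ≤ ℙ {ω | ruinTime Y u ω = ⊤} := by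
  have hA : MeasurableSet[claimsBefore Y 1] {ω | Y 0 ω = 0} :=
    measurable_claimsBefore one_pos (measurableSet_singleton 0)
  have hD : MeasurableSet {f : ℕ → ℕ | ruinTime coordClaims (u + 1) f = ⊤} :=
    measurableSet_ruinTime_eq_top (fun i => measurable_pi_apply i) (by omega)
  calc ℙ {ω | Y 0 ω = 0} * ℙ {ω | ruinTime Y (u + 1) ω = ⊤}
      = ℙ ({ω | Y 0 ω = 0} ∩
          claimPath (shiftClaims Y 1) ⁻¹' {f | ruinTime coordClaims (u + 1) f = ⊤}) :=
        (measure_inter_claimPath_shiftClaims_preimage hY hindep hid hA hD).symm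
    _ ≤ ℙ {ω | ruinTime Y u ω = ⊤} := measure_mono fun ω ⟨h0, h⟩ =>
        ruinTime_eq_top_of_shiftClaims hu h0 h

include hY hindep hid hint hμ in
lemma measure_ruinTime_one_eq_top_pos [IsProbabilityMeasure (ℙ : Measure Ω)] :
    0 < ℙ {ω | ruinTime Y 1 ω = ⊤} := by
  obtain ⟨k, hk⟩ := exists_measure_ruinTime_eq_top_pos hindep hid hint hμ
  induction k with
  | zero => simpa using hk
  | succ k ih =>
    push_cast at hk
    exact ih <| (ENNReal.mul_pos (measure_claim_eq_zero_pos hint hμ).ne' hk.ne').trans_le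
      (measure_claim_eq_zero_mul_le hY hindep hid (by omega))

end Survival

lemma toReal_measure_setOf_ne_top [IsProbabilityMeasure (ℙ : Measure Ω)] {X : Ω → ℕ∞}
    (hX : MeasurableSet {ω | X ω = ⊤}) :
    (ℙ {ω | X ω ≠ ⊤}).toReal = 1 - (ℙ {ω | X ω = ⊤}).toReal :=
  probReal_compl_eq_one_sub hX

lemma deficitSum_eq_toReal [IsFiniteMeasure (ℙ : Measure Ω)] (Y : ℕ → Ω → ℕ) (v : ℤ) (ζ : ℕ) :
    deficitSum Y v ζ = (∑ z ∈ Finset.range ζ,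
      ℙ {ω | ∃ s : ℕ, ruinTime Y v ω = (s : ℕ∞) ∧ riskProc Y v s ω = -(z : ℤ)} *
        ℙ {ω | hitTime Y ((z : ℤ) + 1) ω ≤ (ζ : ℕ∞)}).toReal := by
  rw [deficitSum, ENNReal.toReal_sum fun z _ => ENNReal.mul_ne_top (measure_ne_top _ _)
    (measure_ne_top _ _)]
  simp only [ENNReal.toReal_mul]

lemma toReal_measure_parisian_eq_top [IsFiniteMeasure (ℙ : Measure Ω)] {Y : ℕ → Ω → ℕ}
    (hY : ∀ i, Measurable (Y i)) (hindep : iIndepFun Y ℙ) (hid : ∀ i, IdentDistrib (Y i) (Y 0) ℙ ℙ)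
    {u : ℤ} (hu : 0 < u) (ζ : ℕ) :
    (ℙ {ω | parisian Y u ζ ω = ⊤}).toReal = (ℙ {ω | ruinTime Y u ω = ⊤}).toReal +
      deficitSum Y u ζ * (ℙ {ω | parisian Y 1 ζ ω = ⊤}).toReal := by
  rw [measure_parisian_eq_top hY hindep hid hu, deficitSum_eq_toReal, ENNReal.toReal_add
    (measure_ne_top _ _) (ENNReal.mul_ne_top (ENNReal.sum_ne_top.2 fun z _ =>
      ENNReal.mul_ne_top (measure_ne_top _ _) (measure_ne_top _ _)) (measure_ne_top _ _)),
    ENNReal.toReal_mul]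

theorem parisian_infinite_horizon_general
    [IsProbabilityMeasure (ℙ : Measure Ω)]
    (Y : ℕ → Ω → ℕ) (hY : ∀ i, Measurable (Y i))
    (hindep : iIndepFun Y ℙ)
    (hid : ∀ i, IdentDistrib (Y i) (Y 0) ℙ ℙ)
    (hint : Integrable (fun ω => (Y 0 ω : ℝ)) ℙ)
    (hμ : ∫ ω, (Y 0 ω : ℝ) ∂ℙ < 1)
    (u : ℕ) (hu : 1 ≤ u) (ζ : ℕ) :
    (ℙ {ω | parisian Y (u : ℤ) ζ ω ≠ ⊤}).toReal =
      (ℙ {ω | ruinTime Y (u : ℤ) ω ≠ ⊤}).toReal -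
        (1 - (ℙ {ω | parisian Y (1 : ℤ) ζ ω ≠ ⊤}).toReal) * deficitSum Y (u : ℤ) ζ ∧
    (ℙ {ω | parisian Y (1 : ℤ) ζ ω ≠ ⊤}).toReal =
      ((ℙ {ω | ruinTime Y (1 : ℤ) ω ≠ ⊤}).toReal - deficitSum Y (1 : ℤ) ζ) /
        (1 - deficitSum Y (1 : ℤ) ζ) := by
  have hu' : (0 : ℤ) < u := by exact_mod_cast hu
  have hsurv_u := toReal_measure_parisian_eq_top hY hindep hid hu' ζ
  have hsurv_1 := toReal_measure_parisian_eq_top hY hindep hid one_pos ζ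
  have hnoruin_1 : 0 < (ℙ {ω | ruinTime Y 1 ω = ⊤}).toReal := ENNReal.toReal_pos
    (measure_ruinTime_one_eq_top_pos hY hindep hid hint hμ).ne' (measure_ne_top _ _)
  have hden : 1 - deficitSum Y 1 ζ ≠ 0 := fun h0 => by
    have : (ℙ {ω | ruinTime Y 1 ω = ⊤}).toReal =
        (ℙ {ω | parisian Y 1 ζ ω = ⊤}).toReal * (1 - deficitSum Y 1 ζ) := by
      linear_combination -hsurv_1
    rw [h0, mul_zero] at this
    linarith
  simp only [toReal_measure_setOf_ne_top (measurableSet_parisian_eq_top hY hu'),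
    toReal_measure_setOf_ne_top (measurableSet_ruinTime_eq_top hY hu'),
    toReal_measure_setOf_ne_top (measurableSet_parisian_eq_top hY one_pos),
    toReal_measure_setOf_ne_top (measurableSet_ruinTime_eq_top hY one_pos)]
  refine ⟨by linear_combination -hsurv_u, ?_⟩
  rw [eq_div_iff hden]
  linear_combination -hsurv_1

/-- Infinite-horizon Parisian ruin probability. -/
theorem parisian_infinite_horizon
    [IsProbabilityMeasure (ℙ : Measure Ω)]
    (Y : ℕ → Ω → ℕ) (hY : ∀ i, Measurable (Y i))
    (hindep : iIndepFun Y ℙ)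
    (hid : ∀ i, IdentDistrib (Y i) (Y 0) ℙ ℙ)
    (hint : Integrable (fun ω => (Y 0 ω : ℝ)) ℙ)
    (hμ : ∫ ω, (Y 0 ω : ℝ) ∂ℙ < 1)
    (u : ℕ) (hu : 1 ≤ u) (ζ : ℕ) (hζ : 1 ≤ ζ) :
    (ℙ {ω | parisian Y (u : ℤ) ζ ω ≠ ⊤}).toReal =
      (ℙ {ω | ruinTime Y (u : ℤ) ω ≠ ⊤}).toReal -
        (1 - (ℙ {ω | parisian Y (1 : ℤ) ζ ω ≠ ⊤}).toReal) * deficitSum Y (u : ℤ) ζ ∧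
    (ℙ {ω | parisian Y (1 : ℤ) ζ ω ≠ ⊤}).toReal =
      ((ℙ {ω | ruinTime Y (1 : ℤ) ω ≠ ⊤}).toReal - deficitSum Y (1 : ℤ) ζ) /
        (1 - deficitSum Y (1 : ℤ) ζ) :=
  parisian_infinite_horizon_general Y hY hindep hid hint hμ u hu ζ
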